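/- arXiv:2412.17600 — 2 statements merged into one kernel-verified Lean document; each statement's English description precedes it below -/
import Mathlib

section
/- Define β₄(x, y, t) = −3x − (4/π)y − (2/π)t + (16/π)x² and β₆(x, y, t) = −4y + (48/π)xy + (24/π)xt. Let u₄, u₆ : ℝ → ℝ be differentiable at 0, with β₄(u₄(t), u₆(t), t) = 0 and β₆(u₄(t), u₆(t), t) = 0 for all t in a neighborhood of 0, and (u₄(0), u₆(0)) = (3π/16, 0). Then u₄′(0) = −8/(15π) and u₆′(0) = −9/10. -/
open Real Filter Topology

/-- One-loop β-function of the quartic coupling for the `p = 3` model with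
disorder coupling `t`. -/
noncomputable def beta4 (x y t : ℝ) : ℝ :=
  -3 * x - (4 / π) * y - (2 / π) * t + (16 / π) * x ^ 2

/-- One-loop β-function of the local sextic coupling for the `p = 3` model with
disorder coupling `t`. -/
noncomputable def beta6 (x y t : ℝ) : ℝ :=
  -4 * y + (48 / π) * x * y + (24 / π) * x * t

/-! The fixed-trajectory equations hold identically near `t = 0`, so their derivatives along
the trajectory vanish there. At `(3π/16, 0)` this is a triangular linear system for
`(u₄′(0), u₆′(0))`: the `β₆` equation gives `u₆′(0) = −9/10`, and then the `β₄` equation,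
whose coefficient of `u₄′(0)` is `−3 + 32 u₄(0)/π = 3`, gives `u₄′(0)`. -/

theorem HasDerivAt.eq_zero_of_eventuallyEq_zero {𝕜 F : Type*} [NontriviallyNormedField 𝕜]
    [NormedAddCommGroup F] [NormedSpace 𝕜 F] {f : 𝕜 → F} {f' : F} {x : 𝕜}
    (hf : HasDerivAt f f' x) (h : f =ᶠ[𝓝 x] 0) : f' = 0 :=
  hf.unique ((hasDerivAt_const x 0).congr_of_eventuallyEq h)

section Trajectory

variable {u v : ℝ → ℝ} {a b s : ℝ}

theorem hasDerivAt_beta4 (hu : HasDerivAt u a s) (hv : HasDerivAt v b s) :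
    HasDerivAt (fun t => beta4 (u t) (v t) t)
      (-3 * a - (4 / π) * b - 2 / π + (32 / π) * u s * a) s := by
  refine ((((hu.const_mul (-3)).sub (hv.const_mul (4 / π))).sub
    ((hasDerivAt_id s).const_mul (2 / π))).add ((hu.pow 2).const_mul (16 / π))).congr_deriv ?_
  push_cast
  ring

theorem hasDerivAt_beta6 (hu : HasDerivAt u a s) (hv : HasDerivAt v b s) :
    HasDerivAt (fun t => beta6 (u t) (v t) t)
      (-4 * b + (48 / π) * (a * v s + u s * b) + (24 / π) * (a * s + u s)) s := by
  refine ((((hv.const_mul (-4)).add ((hu.mul hv).const_mul (48 / π))).add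
    ((hu.mul (hasDerivAt_id s)).const_mul (24 / π))).congr_of_eventuallyEq
      (.of_forall fun t => ?_)).congr_deriv ?_
  · simp only [beta6, Pi.add_apply, Pi.mul_apply, id]
    ring
  · simp only [id, mul_one]

end Trajectory

theorem tangent_of_linearized_beta_eq_zero {a b : ℝ}
    (h₄ : -3 * a - (4 / π) * b - 2 / π + (32 / π) * (3 * π / 16) * a = 0)
    (h₆ : -4 * b + (48 / π) * (3 * π / 16 * b) + (24 / π) * (3 * π / 16) = 0) :
    a = -8 / (15 * π) ∧ b = -9 / 10 := by
  have hb : b = -9 / 10 := by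
    field_simp at h₆
    linarith
  refine ⟨?_, hb⟩
  subst hb
  field_simp at h₄ ⊢
  linear_combination h₄ / 32

/-- First-order expansion of the first fixed trajectory of the `p = 3` model:
if `(u₄(t), u₆(t))` is a fixed trajectory with `(u₄(0), u₆(0)) = (3π/16, 0)`,
then `u₄′(0) = −8/(15π)` and `u₆′(0) = −9/10`. -/
theorem p3_first_fixed_trajectory (u₄ u₆ : ℝ → ℝ)
    (h₄ : DifferentiableAt ℝ u₄ 0) (h₆ : DifferentiableAt ℝ u₆ 0)
    (hfix : ∀ᶠ t in 𝓝 (0 : ℝ), beta4 (u₄ t) (u₆ t) t = 0 ∧ beta6 (u₄ t) (u₆ t) t = 0)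
    (h₄0 : u₄ 0 = 3 * π / 16) (h₆0 : u₆ 0 = 0) :
    deriv u₄ 0 = -8 / (15 * π) ∧ deriv u₆ 0 = -9 / 10 := by
  have E₄ := (hasDerivAt_beta4 h₄.hasDerivAt h₆.hasDerivAt).eq_zero_of_eventuallyEq_zero
    (hfix.mono fun _ ht => ht.1)
  have E₆ := (hasDerivAt_beta6 h₄.hasDerivAt h₆.hasDerivAt).eq_zero_of_eventuallyEq_zero
    (hfix.mono fun _ ht => ht.2)
  simp only [h₄0, h₆0, mul_zero, zero_add] at E₄ E₆
  exact tangent_of_linearized_beta_eq_zero E₄ E₆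
end

section
/- Define β₄(x, y, t) = −3x − (4/π)y − (2/π)t + (16/π)x² and β₆(x, y, t) = −4y + (48/π)xy + (24/π)xt. Let u₄, u₆ : ℝ → ℝ be differentiable at 0, with β₄(u₄(t), u₆(t), t) = 0 and β₆(u₄(t), u₆(t), t) = 0 for all t in a neighborhood of 0, and (u₄(0), u₆(0)) = (π/12, −5π²/144). Then u₄′(0) = 6/(5π) and u₆′(0) = −3/5. -/
open Real Filter Topology

/-! At `t = 0` the Jacobian of `(β₄, β₆)` in `(x, y)` is singular (`∂β₆/∂y = -4 + 48x/π` vanishes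
at `x = π/12`), so the tangent is not given by the implicit function theorem; instead, the
derivative of `β₆` along the trajectory only involves `u₄′(0)`, which fixes it, and then the
derivative of `β₄` fixes `u₆′(0)`. -/

theorem HasDerivAt.eq_zero_of_eventually_eq_zero {𝕜 F : Type*} [NontriviallyNormedField 𝕜]
    [NormedAddCommGroup F] [NormedSpace 𝕜 F] {f : 𝕜 → F} {f' : F} {x : 𝕜}
    (hf : HasDerivAt f f' x) (h : ∀ᶠ t in 𝓝 x, f t = 0) : f' = 0 :=
  hf.unique <| (hasDerivAt_const x (0 : F)).congr_of_eventuallyEq h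

section AlongCurve

variable {u₄ u₆ : ℝ → ℝ} {a b s : ℝ}

theorem hasDerivAt_beta4_comp (h₄ : HasDerivAt u₄ a s) (h₆ : HasDerivAt u₆ b s) :
    HasDerivAt (fun t => beta4 (u₄ t) (u₆ t) t)
      ((-3 + 32 / π * u₄ s) * a - 4 / π * b - 2 / π) s := by
  have h := (((h₄.const_mul (-3)).sub (h₆.const_mul (4 / π))).sub
    ((hasDerivAt_id s).const_mul (2 / π))).add ((h₄.pow 2).const_mul (16 / π))
  refine (h.congr_deriv (by norm_num; ring)).congr_of_eventuallyEq (.of_forall fun t => ?_)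
  simp only [beta4, Pi.add_apply, Pi.sub_apply, Pi.pow_apply, id]

theorem hasDerivAt_beta6_comp (h₄ : HasDerivAt u₄ a s) (h₆ : HasDerivAt u₆ b s) :
    HasDerivAt (fun t => beta6 (u₄ t) (u₆ t) t)
      ((48 / π * u₆ s + 24 / π * s) * a + (-4 + 48 / π * u₄ s) * b + 24 / π * u₄ s) s := by
  have h := ((h₆.const_mul (-4)).add ((h₄.mul h₆).const_mul (48 / π))).add
    ((h₄.mul (hasDerivAt_id s)).const_mul (24 / π))
  refine (h.congr_deriv (by simp only [id]; ring)).congr_of_eventuallyEq (.of_forall fun t => ?_)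
  simp only [beta6, Pi.add_apply, Pi.mul_apply, id]
  ring

end AlongCurve

theorem minus_fixed_point_tangent {a b : ℝ}
    (e₄ : (-3 + 32 / π * (π / 12)) * a - 4 / π * b - 2 / π = 0)
    (e₆ : (48 / π * (-5 * π ^ 2 / 144) + 24 / π * 0) * a + (-4 + 48 / π * (π / 12)) * b
      + 24 / π * (π / 12) = 0) :
    a = 6 / (5 * π) ∧ b = -3 / 5 := by
  have hπ : π ≠ 0 := pi_ne_zero
  have e₆' : -5 * π / 3 * a + 2 = 0 := by
    convert e₆ using 1
    field_simp
    ring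
  have e₄' : -a / 3 - (4 * b + 2) / π = 0 := by
    convert e₄ using 1
    field_simp
    ring
  have ha : a = 6 / (5 * π) := by
    field_simp
    linarith
  refine ⟨ha, ?_⟩
  rw [ha] at e₄'
  field_simp at e₄'
  linarith

/-- First-order expansion of the '−' fixed trajectory of the `p = 3` model:
if `(u₄(t), u₆(t))` is a fixed trajectory with `(u₄(0), u₆(0)) = (π/12, −5π²/144)`,
then `u₄′(0) = 6/(5π)` and `u₆′(0) = −3/5`. -/
theorem p3_minus_fixed_trajectory (u₄ u₆ : ℝ → ℝ)
    (h₄ : DifferentiableAt ℝ u₄ 0) (h₆ : DifferentiableAt ℝ u₆ 0)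
    (hfix : ∀ᶠ t in 𝓝 (0 : ℝ), beta4 (u₄ t) (u₆ t) t = 0 ∧ beta6 (u₄ t) (u₆ t) t = 0)
    (h₄0 : u₄ 0 = π / 12) (h₆0 : u₆ 0 = -5 * π ^ 2 / 144) :
    deriv u₄ 0 = 6 / (5 * π) ∧ deriv u₆ 0 = -3 / 5 := by
  have e₄ := (hasDerivAt_beta4_comp h₄.hasDerivAt h₆.hasDerivAt).eq_zero_of_eventually_eq_zero
    (hfix.mono fun _ ht => ht.1)
  have e₆ := (hasDerivAt_beta6_comp h₄.hasDerivAt h₆.hasDerivAt).eq_zero_of_eventually_eq_zero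
    (hfix.mono fun _ ht => ht.2)
  rw [h₄0] at e₄ e₆
  rw [h₆0] at e₆
  exact minus_fixed_point_tangent e₄ e₆
end
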